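/- arXiv:1609.09423 — 3 statements merged into one kernel-verified Lean document; each statement's English description precedes it below -/
import Mathlib

section
/- For every set Γ ⊂ 𝒫¹(S), μ_UI(Γ) ≤ μ_{H,W}(Γ), i.e. the measure of non-uniform integrability of Γ is at most the relative Hausdorff measure of non-compactness of Γ for the Wasserstein metric. -/
open MeasureTheory Filter

/-- The Wasserstein metric via Kantorovich duality. -/
noncomputable def W {S : Type*} [MetricSpace S] [MeasurableSpace S]
    (P Q : Measure S) : ℝ :=
  sSup {r : ℝ | ∃ f : S → ℝ, LipschitzWith 1 f ∧ r = |(∫ x, f x ∂P) - ∫ x, f x ∂Q|}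

/-- `𝒫¹(S)`: Borel probability measures on `S` with finite first moment. -/
def P1 (S : Type*) [MetricSpace S] [MeasurableSpace S] : Set (Measure S) :=
  {P | IsProbabilityMeasure P ∧ ∀ a : S, Integrable (fun x => dist a x) P}

/-- The relative Hausdorff measure of non-compactness for the Wasserstein metric:
`μ_{H,W}(Γ) = inf_{Φ ⊆ 𝒫¹(S) finite nonempty} sup_{P ∈ Γ} inf_{Q ∈ Φ} W(P,Q)`. -/
noncomputable def muHW {S : Type*} [MetricSpace S] [MeasurableSpace S]
    (Γ : Set (Measure S)) : ℝ :=
  sInf {r : ℝ | ∃ Φ : Finset (Measure S), Φ.Nonempty ∧ ↑Φ ⊆ P1 S ∧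
    r = sSup {s : ℝ | ∃ P ∈ Γ, s = sInf {t : ℝ | ∃ Q ∈ Φ, t = W P Q}}}

/-- The measure of non-uniform integrability:
`μ_UI(Γ) = inf_{a ∈ S} inf_{B ⊆ S bounded} sup_{P ∈ Γ} ∫_{S∖B} d(a,·) dP`. -/
noncomputable def muUI {S : Type*} [MetricSpace S] [MeasurableSpace S]
    (Γ : Set (Measure S)) : ℝ :=
  sInf {r : ℝ | ∃ a : S, ∃ B : Set S, Bornology.IsBounded B ∧
    r = sSup {s : ℝ | ∃ P ∈ Γ, s = ∫ x in Bᶜ, dist a x ∂P}}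

/-!
Let `Φ ⊆ 𝒫¹(S)` be finite with every `P ∈ Γ` within `W`-distance `r` of some `Q ∈ Φ`, and fix
`a ∈ S`. The truncated distance `h_R = (d(a, ·) - R)⁺` is `1`-Lipschitz, so
`∫ h_R dP ≤ ∫ h_R dQ + r`, and since `Φ` is finite, `R` can be taken so large that
`∫ h_R dQ ≤ ε / 2` for all `Q ∈ Φ`. Outside the ball of radius `R + K` around `a` we have
`d(a, ·) ≤ (1 + R / K) h_R`, so the tail integrals of `Γ` beyond this ball are at most
`(1 + R / K) (r + ε / 2)`, which is below `r + ε` once `K` is large.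
-/

open Topology

section Wasserstein

variable {S : Type*} [MetricSpace S] [MeasurableSpace S] [OpensMeasurableSpace S]

lemma LipschitzWith.integrable_of_integrable_dist {K : NNReal} {f : S → ℝ}
    (hf : LipschitzWith K f) {P : Measure S} [IsFiniteMeasure P] (a : S)
    (ha : Integrable (fun x => dist a x) P) : Integrable f P := by
  refine ((integrable_const |f a|).add (ha.const_mul K)).mono'
    hf.continuous.aestronglyMeasurable (Eventually.of_forall fun x => ?_)
  have := hf.dist_le_mul x a
  rw [Real.dist_eq, dist_comm] at this
  rw [Real.norm_eq_abs, Pi.add_apply]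
  linarith [abs_sub_abs_le_abs_sub (f x) (f a)]

lemma abs_integral_sub_le_integral_dist {f : S → ℝ} (hf : LipschitzWith 1 f) {P : Measure S}
    [IsProbabilityMeasure P] (a : S) (ha : Integrable (fun x => dist a x) P) :
    |(∫ x, f x ∂P) - f a| ≤ ∫ x, dist a x ∂P := by
  have hf_int := hf.integrable_of_integrable_dist a ha
  calc |(∫ x, f x ∂P) - f a| = |∫ x, (f x - f a) ∂P| := by
        rw [integral_sub hf_int (integrable_const _), integral_const, probReal_univ, one_smul]
    _ ≤ ∫ x, |f x - f a| ∂P := abs_integral_le_integral_abs (f := fun x => f x - f a)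
    _ ≤ ∫ x, dist a x ∂P := integral_mono (hf_int.sub (integrable_const _)).abs ha fun x => by
        simpa [Real.dist_eq, dist_comm, abs_sub_comm] using hf.dist_le_mul x a

lemma abs_integral_sub_integral_le {f : S → ℝ} (hf : LipschitzWith 1 f) {P Q : Measure S}
    (hP : P ∈ P1 S) (hQ : Q ∈ P1 S) (a : S) :
    |(∫ x, f x ∂P) - ∫ x, f x ∂Q| ≤ (∫ x, dist a x ∂P) + ∫ x, dist a x ∂Q := by
  have := hP.1
  have := hQ.1
  calc |(∫ x, f x ∂P) - ∫ x, f x ∂Q|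
      ≤ |(∫ x, f x ∂P) - f a| + |(∫ x, f x ∂Q) - f a| := by
        rw [abs_sub_comm (∫ x, f x ∂Q)]; exact abs_sub_le _ (f a) _
    _ ≤ (∫ x, dist a x ∂P) + ∫ x, dist a x ∂Q :=
        add_le_add (abs_integral_sub_le_integral_dist hf a (hP.2 a))
          (abs_integral_sub_le_integral_dist hf a (hQ.2 a))

omit [OpensMeasurableSpace S] in
lemma W_nonneg (P Q : Measure S) : 0 ≤ W P Q :=
  Real.sSup_nonneg (by rintro _ ⟨f, -, rfl⟩; exact abs_nonneg _)

lemma abs_integral_sub_integral_le_W {f : S → ℝ} (hf : LipschitzWith 1 f) {P Q : Measure S}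
    (hP : P ∈ P1 S) (hQ : Q ∈ P1 S) : |(∫ x, f x ∂P) - ∫ x, f x ∂Q| ≤ W P Q := by
  have := hP.1
  obtain ⟨a⟩ := nonempty_of_isProbabilityMeasure P
  refine le_csSup ⟨(∫ x, dist a x ∂P) + ∫ x, dist a x ∂Q, ?_⟩ ⟨f, hf, rfl⟩
  rintro _ ⟨g, hg, rfl⟩
  exact abs_integral_sub_integral_le hg hP hQ a

lemma W_le_integral_dist_add {P Q : Measure S} (hP : P ∈ P1 S) (hQ : Q ∈ P1 S) (a : S) :
    W P Q ≤ (∫ x, dist a x ∂P) + ∫ x, dist a x ∂Q :=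
  csSup_le ⟨_, _, LipschitzWith.dist_right a, rfl⟩ fun _ ⟨_, hg, hr⟩ =>
    hr ▸ abs_integral_sub_integral_le hg hP hQ a

lemma dirac_mem_P1 (a : S) : Measure.dirac a ∈ P1 S :=
  ⟨inferInstance, fun _ => integrable_dirac enorm_lt_top⟩

omit [MeasurableSpace S] [OpensMeasurableSpace S] in
lemma lipschitzWith_max_dist_sub (a : S) (R : ℝ) :
    LipschitzWith 1 fun x => max (dist a x - R) 0 := by
  simpa using ((LipschitzWith.dist_right a).sub (LipschitzWith.const R)).max_const 0

omit [MeasurableSpace S] [OpensMeasurableSpace S] in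
lemma norm_max_dist_sub_le (a x : S) {R : ℝ} (hR : 0 ≤ R) :
    ‖max (dist a x - R) 0‖ ≤ dist a x := by
  rw [Real.norm_eq_abs, abs_of_nonneg (le_max_right _ _)]
  exact max_le (by linarith) dist_nonneg

lemma tendsto_integral_max_dist_sub {P : Measure S} {a : S}
    (ha : Integrable (fun x => dist a x) P) :
    Tendsto (fun R : ℝ => ∫ x, max (dist a x - R) 0 ∂P) atTop (𝓝 0) := by
  simpa using tendsto_integral_filter_of_dominated_convergence (fun x => dist a x)
    (Eventually.of_forall fun R => (lipschitzWith_max_dist_sub a R).continuous.aestronglyMeasurable)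
    ((eventually_ge_atTop 0).mono fun R hR => Eventually.of_forall fun x =>
      norm_max_dist_sub_le a x hR) ha
    (Eventually.of_forall fun x => tendsto_const_nhds.congr'
      ((eventually_ge_atTop (dist a x)).mono fun R hR => (max_eq_right (by linarith)).symm))

lemma setIntegral_compl_closedBall_le {P : Measure S} {a : S}
    (ha : Integrable (fun x => dist a x) P) {R K : ℝ} (hR : 0 ≤ R) (hK : 0 < K) :
    ∫ x in (Metric.closedBall a (R + K))ᶜ, dist a x ∂P
      ≤ (1 + R / K) * ∫ x, max (dist a x - R) 0 ∂P := by
  have h_int : Integrable (fun x => max (dist a x - R) 0) P :=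
    ha.mono (lipschitzWith_max_dist_sub a R).continuous.aestronglyMeasurable
      (Eventually.of_forall fun x => (norm_max_dist_sub_le a x hR).trans (le_abs_self _))
  -- outside the ball `d - R ≥ K`, so `R ≤ (R / K) (d - R)`
  have h_tail : ∀ x ∈ (Metric.closedBall a (R + K))ᶜ,
      dist a x ≤ (1 + R / K) * max (dist a x - R) 0 := by
    intro x hx
    have hx : R + K < dist a x := by simpa [dist_comm] using hx
    have : R ≤ R / K * (dist a x - R) := by
      rw [div_mul_eq_mul_div, le_div_iff₀ hK]; nlinarith
    nlinarith [le_max_left (dist a x - R) 0]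
  calc ∫ x in (Metric.closedBall a (R + K))ᶜ, dist a x ∂P
      ≤ ∫ x in (Metric.closedBall a (R + K))ᶜ, (1 + R / K) * max (dist a x - R) 0 ∂P :=
        setIntegral_mono_on ha.integrableOn (h_int.const_mul _).integrableOn
          Metric.isClosed_closedBall.measurableSet.compl h_tail
    _ ≤ ∫ x, (1 + R / K) * max (dist a x - R) 0 ∂P :=
        setIntegral_le_integral (h_int.const_mul _) (Eventually.of_forall fun x =>
          mul_nonneg (by positivity) (le_max_right _ _))
    _ = (1 + R / K) * ∫ x, max (dist a x - R) 0 ∂P := integral_const_mul _ _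

lemma exists_tail_le_of_forall_W_le {Γ : Set (Measure S)} (hΓ : Γ ⊆ P1 S)
    {Φ : Finset (Measure S)} (hΦ : ↑Φ ⊆ P1 S) {r : ℝ} (hr : ∀ P ∈ Γ, ∃ Q ∈ Φ, W P Q ≤ r)
    (a : S) {ε : ℝ} (hε : 0 < ε) :
    ∃ B : Set S, Bornology.IsBounded B ∧ ∀ P ∈ Γ, ∫ x in Bᶜ, dist a x ∂P ≤ r + ε := by
  obtain ⟨R, hR, hRΦ⟩ : ∃ R : ℝ, 0 ≤ R ∧ ∀ Q ∈ Φ, ∫ x, max (dist a x - R) 0 ∂Q ≤ ε / 2 :=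
    ((eventually_ge_atTop 0).and <| (eventually_all_finset Φ).2 fun Q hQ =>
      (tendsto_integral_max_dist_sub ((hΦ hQ).2 a)).eventually_le_const (half_pos hε)).exists
  have h_factor : Tendsto (fun K : ℝ => (1 + R / K) * (r + ε / 2)) atTop (𝓝 (r + ε / 2)) := by
    simpa using ((tendsto_const_nhds.div_atTop tendsto_id).const_add 1).mul_const (r + ε / 2)
  obtain ⟨K, hK, hKε⟩ : ∃ K : ℝ, 0 < K ∧ (1 + R / K) * (r + ε / 2) ≤ r + ε :=
    ((eventually_gt_atTop 0).and (h_factor.eventually_le_const (by linarith))).exists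
  refine ⟨Metric.closedBall a (R + K), Metric.isBounded_closedBall, fun P hP => ?_⟩
  obtain ⟨Q, hQ, hPQ⟩ := hr P hP
  have h_trunc : ∫ x, max (dist a x - R) 0 ∂P ≤ r + ε / 2 := by
    have := (le_abs_self _).trans
      (abs_integral_sub_integral_le_W (lipschitzWith_max_dist_sub a R) (hΓ hP) (hΦ hQ))
    linarith [hRΦ Q hQ]
  calc ∫ x in (Metric.closedBall a (R + K))ᶜ, dist a x ∂P
      ≤ (1 + R / K) * ∫ x, max (dist a x - R) 0 ∂P :=
        setIntegral_compl_closedBall_le ((hΓ hP).2 a) hR hK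
    _ ≤ (1 + R / K) * (r + ε / 2) := mul_le_mul_of_nonneg_left h_trunc (by positivity)
    _ ≤ r + ε := hKε

end Wasserstein

section Measures

variable {S : Type*} [MetricSpace S] [MeasurableSpace S]

lemma exists_W_le_sSup {Γ : Set (Measure S)} {Φ : Finset (Measure S)} (hΦ : Φ.Nonempty)
    (hbdd : BddAbove {s : ℝ | ∃ P ∈ Γ, s = sInf {t : ℝ | ∃ Q ∈ Φ, t = W P Q}})
    {P : Measure S} (hP : P ∈ Γ) :
    ∃ Q ∈ Φ, W P Q ≤ sSup {s : ℝ | ∃ P ∈ Γ, s = sInf {t : ℝ | ∃ Q ∈ Φ, t = W P Q}} := by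
  obtain ⟨Q, hQ, hmin⟩ := Φ.exists_min_image (W P) hΦ
  have h_inf : sInf {t : ℝ | ∃ Q ∈ Φ, t = W P Q} = W P Q :=
    IsLeast.csInf_eq ⟨⟨Q, hQ, rfl⟩, by rintro _ ⟨Q', hQ', rfl⟩; exact hmin Q' hQ'⟩
  exact ⟨Q, hQ, h_inf ▸ le_csSup hbdd ⟨P, hP, rfl⟩⟩

lemma bddAbove_sInf_W_of_bddAbove_integral_dist [OpensMeasurableSpace S]
    {Γ : Set (Measure S)} (hΓ : Γ ⊆ P1 S) {Φ : Finset (Measure S)}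
    {Q₀ : Measure S} (hQ₀ : Q₀ ∈ Φ) (hQ₀_mem : Q₀ ∈ P1 S) (a : S)
    (h : BddAbove {s : ℝ | ∃ P ∈ Γ, s = ∫ x, dist a x ∂P}) :
    BddAbove {s : ℝ | ∃ P ∈ Γ, s = sInf {t : ℝ | ∃ Q ∈ Φ, t = W P Q}} := by
  obtain ⟨M, hM⟩ := h
  refine ⟨M + ∫ x, dist a x ∂Q₀, ?_⟩
  rintro _ ⟨P, hP, rfl⟩
  calc sInf {t : ℝ | ∃ Q ∈ Φ, t = W P Q}
      ≤ W P Q₀ := csInf_le ⟨0, by rintro _ ⟨Q, -, rfl⟩; exact W_nonneg P Q⟩ ⟨Q₀, hQ₀, rfl⟩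
    _ ≤ (∫ x, dist a x ∂P) + ∫ x, dist a x ∂Q₀ := W_le_integral_dist_add (hΓ hP) hQ₀_mem a
    _ ≤ M + ∫ x, dist a x ∂Q₀ := by linarith [hM ⟨P, hP, rfl⟩]

lemma sSup_sInf_W_nonneg (Γ : Set (Measure S)) (Φ : Finset (Measure S)) :
    0 ≤ sSup {s : ℝ | ∃ P ∈ Γ, s = sInf {t : ℝ | ∃ Q ∈ Φ, t = W P Q}} :=
  Real.sSup_nonneg <| by
    rintro _ ⟨P, -, rfl⟩
    exact Real.sInf_nonneg <| by rintro _ ⟨Q, -, rfl⟩; exact W_nonneg P Q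

lemma muHW_nonneg (Γ : Set (Measure S)) : 0 ≤ muHW Γ :=
  Real.sInf_nonneg <| by rintro _ ⟨Φ, -, -, rfl⟩; exact sSup_sInf_W_nonneg Γ Φ

lemma muUI_le_sSup (Γ : Set (Measure S)) (a : S) {B : Set S} (hB : Bornology.IsBounded B) :
    muUI Γ ≤ sSup {s : ℝ | ∃ P ∈ Γ, s = ∫ x in Bᶜ, dist a x ∂P} := by
  refine csInf_le ⟨0, ?_⟩ ⟨a, B, hB, rfl⟩
  rintro _ ⟨a, B, -, rfl⟩
  exact Real.sSup_nonneg (by rintro _ ⟨P, -, rfl⟩; exact integral_nonneg fun _ => dist_nonneg)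

lemma muUI_le_of_forall_pos {Γ : Set (Measure S)} {r : ℝ} (hr : 0 ≤ r)
    (h : ∀ ε > 0, ∃ a : S, ∃ B : Set S, Bornology.IsBounded B ∧
      ∀ P ∈ Γ, ∫ x in Bᶜ, dist a x ∂P ≤ r + ε) :
    muUI Γ ≤ r := by
  refine le_of_forall_pos_le_add fun ε hε => ?_
  obtain ⟨a, B, hB, hΓ⟩ := h ε hε
  exact (muUI_le_sSup Γ a hB).trans
    (Real.sSup_le (by rintro _ ⟨P, hP, rfl⟩; exact hΓ P hP) (by linarith))

lemma muUI_nonpos_of_not_bddAbove {Γ : Set (Measure S)} (a : S)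
    (h : ¬BddAbove {s : ℝ | ∃ P ∈ Γ, s = ∫ x, dist a x ∂P}) : muUI Γ ≤ 0 := by
  have := muUI_le_sSup Γ a Bornology.isBounded_empty
  simp only [Set.compl_empty, Measure.restrict_univ] at this
  rwa [Real.sSup_of_not_bddAbove h] at this

lemma muUI_of_isEmpty [IsEmpty S] (Γ : Set (Measure S)) : muUI Γ = 0 := by
  simp [muUI]

end Measures

theorem muUI_le_muHW_general
    {S : Type*} [MetricSpace S]
    [MeasurableSpace S] [BorelSpace S]
    (Γ : Set (Measure S)) (hΓ : Γ ⊆ P1 S) :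
    muUI Γ ≤ muHW Γ := by
  rcases isEmpty_or_nonempty S with _ | ⟨⟨a⟩⟩
  · exact (muUI_of_isEmpty Γ).trans_le (muHW_nonneg Γ)
  refine le_csInf ⟨_, {Measure.dirac a}, Finset.singleton_nonempty _,
    by simpa using dirac_mem_P1 a, rfl⟩ ?_
  rintro _ ⟨Φ, hΦ, hΦ_mem, rfl⟩
  by_cases hbdd : BddAbove {s : ℝ | ∃ P ∈ Γ, s = sInf {t : ℝ | ∃ Q ∈ Φ, t = W P Q}}
  · exact muUI_le_of_forall_pos (sSup_sInf_W_nonneg Γ Φ) fun ε hε => ⟨a,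
      exists_tail_le_of_forall_W_le hΓ hΦ_mem (fun P hP => exists_W_le_sSup hΦ hbdd hP) a hε⟩
  · -- `sSup` of the unbounded set is the junk value `0`; the first moments over `Γ` are then
    -- unbounded too, which forces `muUI Γ ≤ 0` through the same junk value
    obtain ⟨Q₀, hQ₀⟩ := hΦ
    rw [Real.sSup_of_not_bddAbove hbdd]
    exact muUI_nonpos_of_not_bddAbove a
      (mt (bddAbove_sInf_W_of_bddAbove_integral_dist hΓ hQ₀ (hΦ_mem hQ₀) a) hbdd)

/-- For every `Γ ⊆ 𝒫¹(S)`, `μ_UI(Γ) ≤ μ_{H,W}(Γ)`. -/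
theorem muUI_le_muHW
    {S : Type*} [MetricSpace S] [CompleteSpace S] [TopologicalSpace.SeparableSpace S]
    [MeasurableSpace S] [BorelSpace S]
    (Γ : Set (Measure S)) (hΓ : Γ ⊆ P1 S) :
    muUI Γ ≤ muHW Γ :=
  muUI_le_muHW_general Γ hΓ
end

section
/- Let (P_η)_{η∈D} be a net in 𝒫¹(S) converging weakly to a Borel probability measure P on S, let a ∈ S, let B ⊂ S be a metrically bounded set, and let α > 0 be such that ∫_{S∖B} d(a,·) dP_η ≤ α for every η. Then ∫_S d(a,·) dP ≤ sup_{x∈B} d(a,x) + α; in particular P has a finite first moment, i.e. P ∈ 𝒫¹(S). -/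
/-!
Let `M = sup_B d(a,·)`. Each truncation `min (d(a,·)) n` is bounded and continuous, and its
`P_η`-integral is at most `M + α`: it is `≤ M` on the ball `{d(a,·) ≤ M} ⊇ B`, and off that ball
it is dominated by `d(a,·)`, whose integral over `S ∖ B` is `≤ α`. Weak convergence passes this
bound to `P`, and monotone convergence in `n` gives it for `d(a,·)` itself.
-/

open MeasureTheory Filter Topology Set

section Truncation

variable {X : Type*} [MeasurableSpace X] {μ : Measure X} {f : X → ℝ}

lemma lintegral_ofReal_le_of_forall_integral_min_le [IsFiniteMeasure μ] {C : ℝ}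
    (hf0 : 0 ≤ᵐ[μ] f) (hf : AEMeasurable f μ) (h : ∀ n : ℕ, ∫ x, min (f x) n ∂μ ≤ C) :
    ∫⁻ x, ENNReal.ofReal (f x) ∂μ ≤ ENNReal.ofReal C := by
  have htendsto : Tendsto (fun n : ℕ ↦ ∫⁻ x, ENNReal.ofReal (min (f x) n) ∂μ) atTop
      (𝓝 (∫⁻ x, ENNReal.ofReal (f x) ∂μ)) := by
    refine lintegral_tendsto_of_tendsto_of_monotone
      (fun n ↦ (hf.min aemeasurable_const).ennreal_ofReal) ?_ ?_
    · exact ae_of_all _ fun x m n hmn ↦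
        ENNReal.ofReal_le_ofReal (min_le_min_left _ (by exact_mod_cast hmn))
    · refine ae_of_all _ fun x ↦ tendsto_const_nhds.congr' ?_
      filter_upwards [eventually_ge_atTop ⌈f x⌉₊] with n hn
      rw [min_eq_left ((Nat.le_ceil _).trans (by exact_mod_cast hn))]
  refine le_of_tendsto' htendsto fun n ↦ ?_
  have hmin0 : 0 ≤ᵐ[μ] fun x ↦ min (f x) n := hf0.mono fun x hx ↦ le_min hx n.cast_nonneg
  have hmin : Integrable (fun x ↦ min (f x) n) μ := by
    refine .of_bound (hf.min aemeasurable_const).aestronglyMeasurable n ?_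
    filter_upwards [hmin0] with x hx
    rw [Real.norm_of_nonneg hx]
    exact min_le_right _ _
  rw [← ofReal_integral_eq_lintegral_ofReal hmin hmin0]
  exact ENNReal.ofReal_le_ofReal (h n)

lemma integrable_and_integral_le_of_forall_integral_min_le [IsFiniteMeasure μ] {C : ℝ}
    (hf0 : 0 ≤ᵐ[μ] f) (hf : AEMeasurable f μ) (h : ∀ n : ℕ, ∫ x, min (f x) n ∂μ ≤ C) :
    Integrable f μ ∧ ∫ x, f x ∂μ ≤ C := by
  have hlint := lintegral_ofReal_le_of_forall_integral_min_le hf0 hf h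
  have hC : 0 ≤ C :=
    (integral_nonneg_of_ae (hf0.mono fun x hx ↦ le_min hx (Nat.cast_nonneg 0))).trans (h 0)
  refine ⟨⟨hf.aestronglyMeasurable,
    (hasFiniteIntegral_iff_ofReal hf0).2 (hlint.trans_lt ENNReal.ofReal_lt_top)⟩, ?_⟩
  rw [integral_eq_lintegral_of_nonneg_ae hf0 hf.aestronglyMeasurable]
  exact ENNReal.toReal_le_of_le_ofReal hC hlint

end Truncation

section TailBound

variable {X : Type*} [MeasurableSpace X] {μ : Measure X} [IsProbabilityMeasure μ] {f : X → ℝ}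

lemma integral_le_add_setIntegral_compl {K : Set X} {M : ℝ} (hf : Integrable f μ)
    (hK : MeasurableSet K) (hM : 0 ≤ M) (hfK : ∀ x ∈ K, f x ≤ M) :
    ∫ x, f x ∂μ ≤ M + ∫ x in Kᶜ, f x ∂μ := by
  rw [← integral_add_compl hK hf]
  gcongr
  calc ∫ x in K, f x ∂μ ≤ ∫ _ in K, M ∂μ :=
        setIntegral_mono_on hf.integrableOn (integrable_const M).integrableOn hK hfK
    _ = μ.real K * M := by rw [setIntegral_const, smul_eq_mul]
    _ ≤ M := mul_le_of_le_one_left hM measureReal_le_one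

lemma integral_min_le_sSup_image_add_setIntegral_compl (hf : Integrable f μ) (hf0 : 0 ≤ f)
    (hfm : Measurable f) {B : Set X} (hB : BddAbove (f '' B)) (t : ℝ) :
    ∫ x, min (f x) t ∂μ ≤ sSup (f '' B) + ∫ x in Bᶜ, f x ∂μ := by
  set M := sSup (f '' B)
  have hBK : B ⊆ {x | f x ≤ M} := fun x hx ↦ le_csSup hB (mem_image_of_mem f hx)
  have hM : 0 ≤ M := Real.sSup_nonneg (by rintro _ ⟨x, -, rfl⟩; exact hf0 x)
  have hmin : Integrable (fun x ↦ min (f x) t) μ := hf.inf (integrable_const t)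
  calc ∫ x, min (f x) t ∂μ ≤ M + ∫ x in {x | f x ≤ M}ᶜ, min (f x) t ∂μ :=
        integral_le_add_setIntegral_compl hmin (measurableSet_le hfm measurable_const) hM
          fun x hx ↦ (min_le_left _ _).trans hx
    _ ≤ M + ∫ x in {x | f x ≤ M}ᶜ, f x ∂μ := add_le_add le_rfl <|
        setIntegral_mono hmin.integrableOn hf.integrableOn fun x ↦ min_le_left _ _
    _ ≤ M + ∫ x in Bᶜ, f x ∂μ := add_le_add le_rfl <|
        setIntegral_mono_set hf.integrableOn (ae_of_all _ hf0)
          (compl_subset_compl.2 hBK).eventuallyLE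

end TailBound

theorem finite_first_moment_of_weak_limit_general
    {S : Type*} [MetricSpace S]
    [MeasurableSpace S] [BorelSpace S]
    {D : Type*} [Preorder D] [IsDirected D (· ≤ ·)] [Nonempty D]
    (Pn : D → Measure S) (hPnprob : ∀ η, IsProbabilityMeasure (Pn η))
    (hPnmom : ∀ η, ∀ b : S, Integrable (fun x => dist b x) (Pn η))
    (P : Measure S) (hPprob : IsProbabilityMeasure P)
    (hweak : ∀ f : S → ℝ, Continuous f → (∃ C : ℝ, ∀ x : S, |f x| ≤ C) →
      Tendsto (fun η => ∫ x, f x ∂(Pn η)) atTop (nhds (∫ x, f x ∂P)))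
    (a : S) (B : Set S) (hB : Bornology.IsBounded B)
    (α : ℝ)
    (hint : ∀ η, ∫ x in Bᶜ, dist a x ∂(Pn η) ≤ α) :
    Integrable (fun x => dist a x) P ∧
      ∫ x, dist a x ∂P ≤ sSup ((fun x => dist a x) '' B) + α := by
  have hdist : Continuous fun x ↦ dist a x := continuous_const.dist continuous_id
  have hbdd : BddAbove ((fun x ↦ dist a x) '' B) :=
    ((LipschitzWith.dist_right a).isBounded_image hB).bddAbove
  have htrunc : ∀ n : ℕ, ∫ x, min (dist a x) n ∂P ≤ sSup ((fun x ↦ dist a x) '' B) + α := by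
    intro n
    refine le_of_tendsto' (hweak _ (hdist.min continuous_const) ⟨n, fun x ↦ ?_⟩) fun η ↦ ?_
    · rw [abs_of_nonneg (le_min dist_nonneg n.cast_nonneg)]
      exact min_le_right _ _
    · have := hPnprob η
      exact (integral_min_le_sSup_image_add_setIntegral_compl (hPnmom η a)
        (fun _ ↦ dist_nonneg) hdist.measurable hbdd n).trans (add_le_add le_rfl (hint η))
  exact integrable_and_integral_le_of_forall_integral_min_le (ae_of_all _ fun _ ↦ dist_nonneg)
    hdist.aemeasurable htrunc

/-- Let `(P_η)` be a net in `𝒫¹(S)` converging weakly to a Borel probability measure `P`,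
`a ∈ S`, `B ⊆ S` metrically bounded, and `α > 0` with `∫_{S∖B} d(a,·) dP_η ≤ α` for every
`η`. Then `∫ d(a,·) dP ≤ sup_{x ∈ B} d(a,x) + α`; in particular `P` has a finite first
moment. -/
theorem finite_first_moment_of_weak_limit
    {S : Type*} [MetricSpace S] [CompleteSpace S] [TopologicalSpace.SeparableSpace S]
    [MeasurableSpace S] [BorelSpace S]
    {D : Type*} [Preorder D] [IsDirected D (· ≤ ·)] [Nonempty D]
    (Pn : D → Measure S) (hPnprob : ∀ η, IsProbabilityMeasure (Pn η))
    (hPnmom : ∀ η, ∀ b : S, Integrable (fun x => dist b x) (Pn η))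
    (P : Measure S) (hPprob : IsProbabilityMeasure P)
    (hweak : ∀ f : S → ℝ, Continuous f → (∃ C : ℝ, ∀ x : S, |f x| ≤ C) →
      Tendsto (fun η => ∫ x, f x ∂(Pn η)) atTop (nhds (∫ x, f x ∂P)))
    (a : S) (B : Set S) (hB : Bornology.IsBounded B)
    (α : ℝ) (hα : 0 < α)
    (hint : ∀ η, ∫ x in Bᶜ, dist a x ∂(Pn η) ≤ α) :
    Integrable (fun x => dist a x) P ∧
      ∫ x, dist a x ∂P ≤ sSup ((fun x => dist a x) '' B) + α :=
  finite_first_moment_of_weak_limit_general Pn hPnprob hPnmom P hPprob hweak a B hB α hint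
end

section
/- Let (P_η)_{η∈D} be a net in 𝒫¹(S) converging weakly to P ∈ 𝒫¹(S), let a ∈ S, let B ⊂ S be a metrically bounded set, and let α > 0 be such that ∫_{S∖B} d(a,·) dP_η < α for every η. Then for every 1-Lipschitz f : S → ℝ with f(a) = 0, limsup_η ∫ f dP_η ≤ ∫ f dP + α. -/
open MeasureTheory Filter Topology

/-!
Since `f` is 1-Lipschitz and vanishes at `a`, `|f| ≤ d(a, ·)`. Choose `R ≥ 0` with
`B ⊆ closedBall a R`. The excess of `f` over `min f R` is at most `(d(a, ·) - R)⁺`, which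
vanishes on `B`, so its `P_η`-integral is at most `∫_{Bᶜ} d(a, ·) dP_η < α`; the same bound
gives `∫ f dP_η ≥ -R - α`, so the limsup is not a junk value. Clipping `min f R` from below
at `-m` makes it bounded and continuous, so weak convergence applies, and letting `m → ∞`
(dominated convergence) gives `limsup ∫ f dP_η ≤ ∫ min f R dP + α ≤ ∫ f dP + α`.
-/

lemma Filter.limsup_le_of_le_of_tendsto {ι : Type*} {l : Filter ι} [l.NeBot] {u v : ι → ℝ}
    {c L : ℝ} (hc : ∀ i, c ≤ u i) (huv : ∀ i, u i ≤ v i) (hv : Tendsto v l (𝓝 L)) :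
    limsup u l ≤ L :=
  hv.limsup_eq ▸ limsup_le_limsup (.of_forall huv) (isCoboundedUnder_le_of_le l hc)
    hv.isBoundedUnder_le

lemma MeasureTheory.tendsto_integral_max_neg_natCast {α : Type*} [MeasurableSpace α]
    {μ : Measure α} {h : α → ℝ} (hh : Integrable h μ) :
    Tendsto (fun n : ℕ => ∫ x, max (h x) (-n) ∂μ) atTop (𝓝 (∫ x, h x ∂μ)) := by
  refine tendsto_integral_of_dominated_convergence (fun x => |h x|)
    (fun n => hh.aestronglyMeasurable.sup aestronglyMeasurable_const) hh.abs
    (fun n => .of_forall fun x => ?_) (.of_forall fun x => ?_)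
  · rw [Real.norm_eq_abs, abs_le]
    constructor <;> cases max_cases (h x) (-(n : ℝ)) <;>
      linarith [neg_abs_le (h x), le_abs_self (h x)]
  · refine tendsto_const_nhds.congr' ?_
    obtain ⟨N, hN⟩ := exists_nat_ge (-h x)
    filter_upwards [eventually_ge_atTop N] with n hn
    exact (max_eq_left (by linarith [(Nat.cast_le (α := ℝ)).2 hn])).symm

section
variable {S : Type*} [PseudoMetricSpace S]

lemma LipschitzWith.abs_le_dist_of_eq_zero {f : S → ℝ} (hf : LipschitzWith 1 f) {a : S}
    (hfa : f a = 0) (x : S) : |f x| ≤ dist a x := by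
  simpa [Real.dist_eq, hfa, dist_comm] using hf.dist_le_mul x a

variable [MeasurableSpace S] [OpensMeasurableSpace S] {μ : Measure S} {a : S}

lemma LipschitzWith.integrable_of_integrable_dist_s14 {f : S → ℝ} (hf : LipschitzWith 1 f)
    (hfa : f a = 0) (hμ : Integrable (dist a ·) μ) : Integrable f μ :=
  hμ.mono hf.continuous.aestronglyMeasurable <| .of_forall fun x => by
    simpa [abs_of_nonneg dist_nonneg] using hf.abs_le_dist_of_eq_zero hfa x

lemma integrable_max_dist_sub {R : ℝ} (hR : 0 ≤ R) (hμ : Integrable (dist a ·) μ) :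
    Integrable (fun x => max (dist a x - R) 0) μ :=
  hμ.mono (by fun_prop : Continuous fun x => max (dist a x - R) 0).aestronglyMeasurable <|
    .of_forall fun x => by
      rw [Real.norm_of_nonneg (le_max_right _ _), Real.norm_of_nonneg dist_nonneg]
      exact max_le (by linarith) dist_nonneg

lemma integral_max_dist_sub_le_setIntegral_compl {B : Set S} {R : ℝ} (hR : 0 ≤ R)
    (hBR : B ⊆ Metric.closedBall a R) (hμ : Integrable (dist a ·) μ) :
    ∫ x, max (dist a x - R) 0 ∂μ ≤ ∫ x in Bᶜ, dist a x ∂μ := by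
  have htail := integrable_max_dist_sub (a := a) hR hμ
  rw [← setIntegral_eq_integral_of_forall_compl_eq_zero (s := Bᶜ) fun x hx => ?_]
  · exact setIntegral_mono htail.integrableOn hμ.integrableOn fun x =>
      max_le (by linarith) dist_nonneg
  · have : dist a x ≤ R := by simpa [dist_comm] using hBR (not_not.1 hx)
    exact max_eq_right (by linarith)

variable {f : S → ℝ} {B : Set S} {R : ℝ}

lemma integral_le_integral_add_setIntegral_compl (hf : LipschitzWith 1 f) (hfa : f a = 0)
    (hR : 0 ≤ R) (hBR : B ⊆ Metric.closedBall a R) (hμ : Integrable (dist a ·) μ)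
    {g : S → ℝ} (hg : Integrable g μ) (hfg : ∀ x, min (f x) R ≤ g x) :
    ∫ x, f x ∂μ ≤ ∫ x, g x ∂μ + ∫ x in Bᶜ, dist a x ∂μ := by
  have htail := integrable_max_dist_sub (a := a) hR hμ
  calc ∫ x, f x ∂μ ≤ ∫ x, (g x + max (dist a x - R) 0) ∂μ :=
        integral_mono (hf.integrable_of_integrable_dist_s14 hfa hμ) (hg.add htail) fun x => by
          have := (abs_le.1 (hf.abs_le_dist_of_eq_zero hfa x)).2
          cases min_cases (f x) R <;>
            linarith [hfg x, le_max_left (dist a x - R) 0, le_max_right (dist a x - R) 0]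
    _ ≤ ∫ x, g x ∂μ + ∫ x in Bᶜ, dist a x ∂μ := by
        rw [integral_add hg htail]
        gcongr
        exact integral_max_dist_sub_le_setIntegral_compl hR hBR hμ

lemma neg_sub_setIntegral_compl_le_integral [IsProbabilityMeasure μ] (hf : LipschitzWith 1 f)
    (hfa : f a = 0) (hR : 0 ≤ R) (hBR : B ⊆ Metric.closedBall a R)
    (hμ : Integrable (dist a ·) μ) :
    -R - ∫ x in Bᶜ, dist a x ∂μ ≤ ∫ x, f x ∂μ := by
  have htail := integrable_max_dist_sub (a := a) hR hμ
  calc -R - ∫ x in Bᶜ, dist a x ∂μ ≤ ∫ x, (-R - max (dist a x - R) 0) ∂μ := by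
        rw [integral_sub (integrable_const _) htail, integral_const, probReal_univ, one_smul]
        gcongr
        exact integral_max_dist_sub_le_setIntegral_compl hR hBR hμ
    _ ≤ ∫ x, f x ∂μ :=
        integral_mono ((integrable_const _).sub htail) (hf.integrable_of_integrable_dist_s14 hfa hμ)
          fun x => by
            linarith [(abs_le.1 (hf.abs_le_dist_of_eq_zero hfa x)).1,
              le_max_left (dist a x - R) 0]

end

theorem limsup_integral_le_of_weak_limit_general
    {S : Type*} [MetricSpace S]
    [MeasurableSpace S] [BorelSpace S]
    {D : Type*} [Preorder D] [IsDirected D (· ≤ ·)] [Nonempty D]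
    (Pn : D → Measure S) (hPnprob : ∀ η, IsProbabilityMeasure (Pn η))
    (hPnmom : ∀ η, ∀ b : S, Integrable (fun x => dist b x) (Pn η))
    (P : Measure S) (hPprob : IsProbabilityMeasure P)
    (hPmom : ∀ b : S, Integrable (fun x => dist b x) P)
    (hweak : ∀ f : S → ℝ, Continuous f → (∃ C : ℝ, ∀ x : S, |f x| ≤ C) →
      Tendsto (fun η => ∫ x, f x ∂(Pn η)) atTop (nhds (∫ x, f x ∂P)))
    (a : S) (B : Set S) (hB : Bornology.IsBounded B)
    (α : ℝ)
    (hint : ∀ η, ∫ x in Bᶜ, dist a x ∂(Pn η) < α) :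
    ∀ f : S → ℝ, LipschitzWith 1 f → f a = 0 →
      limsup (fun η => ∫ x, f x ∂(Pn η)) atTop ≤ (∫ x, f x ∂P) + α := by
  intro f hf hfa
  obtain ⟨R, hR, hBR⟩ := hB.subset_closedBall_lt 0 a
  set g : ℕ → S → ℝ := fun m x => max (min (f x) R) (-m)
  have hg_cont (m : ℕ) : Continuous (g m) :=
    (hf.continuous.min continuous_const).max continuous_const
  have hg_bdd (m : ℕ) (x : S) : |g m x| ≤ R + m := by
    have hm : (0 : ℝ) ≤ m := m.cast_nonneg
    exact abs_le.2 ⟨by linarith [le_max_right (min (f x) R) (-m)],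
      max_le (by linarith [min_le_right (f x) R]) (by linarith)⟩
  have hg_int (m : ℕ) (μ : Measure S) [IsFiniteMeasure μ] : Integrable (g m) μ :=
    (integrable_const (R + m)).mono' (hg_cont m).aestronglyMeasurable (.of_forall (hg_bdd m))
  have hlimsup (m : ℕ) :
      limsup (fun η => ∫ x, f x ∂(Pn η)) atTop ≤ ∫ x, g m x ∂P + α := by
    refine Filter.limsup_le_of_le_of_tendsto (c := -R - α) (fun η => ?_) (fun η => ?_)
      ((hweak _ (hg_cont m) ⟨_, hg_bdd m⟩).add_const α)
    · have := hPnprob η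
      exact (sub_le_sub_left (hint η).le _).trans
        (neg_sub_setIntegral_compl_le_integral hf hfa hR.le hBR (hPnmom η a))
    · have := hPnprob η
      exact (integral_le_integral_add_setIntegral_compl hf hfa hR.le hBR (hPnmom η a)
        (hg_int m _) fun x => le_max_left _ _).trans (add_le_add_right (hint η).le _)
  have := hPprob
  have hf_int := hf.integrable_of_integrable_dist_s14 hfa (hPmom a)
  have hfR_int : Integrable (fun x => min (f x) R) P := hf_int.inf (integrable_const R)
  calc limsup (fun η => ∫ x, f x ∂(Pn η)) atTop ≤ ∫ x, min (f x) R ∂P + α :=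
        ge_of_tendsto' ((tendsto_integral_max_neg_natCast hfR_int).add_const α) hlimsup
    _ ≤ ∫ x, f x ∂P + α :=
        add_le_add_left (integral_mono hfR_int hf_int fun x => min_le_left _ _) α

/-- Let `(P_η)` be a net in `𝒫¹(S)` converging weakly to `P ∈ 𝒫¹(S)`, `a ∈ S`, `B ⊆ S`
metrically bounded, and `α > 0` with `∫_{S∖B} d(a,·) dP_η < α` for every `η`. Then for
every 1-Lipschitz `f : S → ℝ` with `f a = 0`,
`limsup_η ∫ f dP_η ≤ ∫ f dP + α`. -/
theorem limsup_integral_le_of_weak_limit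
    {S : Type*} [MetricSpace S] [CompleteSpace S] [TopologicalSpace.SeparableSpace S]
    [MeasurableSpace S] [BorelSpace S]
    {D : Type*} [Preorder D] [IsDirected D (· ≤ ·)] [Nonempty D]
    (Pn : D → Measure S) (hPnprob : ∀ η, IsProbabilityMeasure (Pn η))
    (hPnmom : ∀ η, ∀ b : S, Integrable (fun x => dist b x) (Pn η))
    (P : Measure S) (hPprob : IsProbabilityMeasure P)
    (hPmom : ∀ b : S, Integrable (fun x => dist b x) P)
    (hweak : ∀ f : S → ℝ, Continuous f → (∃ C : ℝ, ∀ x : S, |f x| ≤ C) →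
      Tendsto (fun η => ∫ x, f x ∂(Pn η)) atTop (nhds (∫ x, f x ∂P)))
    (a : S) (B : Set S) (hB : Bornology.IsBounded B)
    (α : ℝ) (hα : 0 < α)
    (hint : ∀ η, ∫ x in Bᶜ, dist a x ∂(Pn η) < α) :
    ∀ f : S → ℝ, LipschitzWith 1 f → f a = 0 →
      limsup (fun η => ∫ x, f x ∂(Pn η)) atTop ≤ (∫ x, f x ∂P) + α :=
  limsup_integral_le_of_weak_limit_general Pn hPnprob hPnmom P hPprob hPmom hweak a B hB α hint
end
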